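/- Let k ≥ 3, let G = (V,E) be a (k−2)-connected k-colorable chordal graph, and let T be a clique of G with T ≠ V such that (G,T) is obtained from (G−v, T∖{v}) by an introduce operation. Let α and β be k-colorings of G, and write α'' and β'' for their restrictions to V∖{v}. Suppose C^c_k(G,T) is a forest with a unique α-β-path P' (the unique path from the α-node to the β-node). Then: if C^c_k(G−v, T∖{v}) is a forest with a unique path P from the α''-node to the β''-node, then w(P') ≤ w(P) + 2; otherwise, w(P') = 0. -/

import Mathlib

/-!
If `P'` has an edge, a colour is free on `T`, while `T ∖ {v}` separates `v` from `V ∖ T` in the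
`(k-2)`-connected graph `G`; hence `|T| = k - 1`, every vertex of `P'` has weight `1`, and
`w(P') = |V(P')|`.

Restricting colourings to `G - v` maps `C^c_k(G,T)` onto `C^c_k(G-v, T∖{v})`. Distinct label
components with the same image differ only at `v`, so they are adjacent, and as the forest has no
triangles each fibre has at most two elements. Since `|T ∖ {v}| = k - 2`, every edge below lifts,
so the lower graph is the contraction of a forest along cliques, hence a forest, and `P'` projects
onto the unique path `P`. A vertex of `P` with two preimages on `P'` is an end of `P` or has
weight `2`: the two preimages give `v` the two colours missing at it, and its two neighbours on
`P` bring one each. Summing over the fibres, `|V(P')| ≤ w(P) + 2`.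
-/

open SimpleGraph

/-- A proper `k`-coloring of a graph. -/
def IsColoring {W : Type*} (G : SimpleGraph W) (k : ℕ) (α : W → Fin k) : Prop :=
  ∀ u v : W, G.Adj u v → α u ≠ α v

/-- The `k`-color graph `C_k(G)`: nodes are proper `k`-colorings of `G`,
two colorings being adjacent iff they differ on exactly one vertex. -/
def colorGraph {W : Type*} (G : SimpleGraph W) (k : ℕ) :
    SimpleGraph {α : W → Fin k // IsColoring G k α} where
  Adj α β := ∃! w, α.1 w ≠ β.1 w
  symm := ⟨by
    rintro α β ⟨w, hw, hu⟩
    exact ⟨w, hw.symm, fun u hu' => hu u hu'.symm⟩⟩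
  loopless := ⟨by
    rintro α ⟨w, hw, -⟩
    exact hw rfl⟩

/-- The subgraph of a labeled graph consisting of the edges between
equally labeled nodes. -/
def sameLabelSub {N L : Type*} (H : SimpleGraph N) (f : N → L) : SimpleGraph N where
  Adj x y := H.Adj x y ∧ f x = f y
  symm := ⟨fun _ _ h => ⟨h.1.symm, h.2.symm⟩⟩
  loopless := ⟨fun x h => H.loopless.irrefl x h.1⟩

/-- The quotient graph obtained from a labeled graph by contracting every
(maximal) connected set of equally labeled nodes (i.e. every label component)
into a single node. -/
def quotGraph {N L : Type*} (H : SimpleGraph N) (f : N → L) :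
    SimpleGraph (sameLabelSub H f).ConnectedComponent where
  Adj c d := c ≠ d ∧ ∃ a b, (sameLabelSub H f).connectedComponentMk a = c ∧
      (sameLabelSub H f).connectedComponentMk b = d ∧ H.Adj a b
  symm := ⟨by
    rintro c d ⟨hne, a, b, ha, hb, hab⟩
    exact ⟨hne.symm, b, a, hb, ha, hab.symm⟩⟩
  loopless := ⟨fun c h => h.1 rfl⟩

/-- The common label of a label component. -/
def quotLabel {N L : Type*} (H : SimpleGraph N) (f : N → L) :
    (sameLabelSub H f).ConnectedComponent → L :=
  SimpleGraph.ConnectedComponent.lift f (by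
    intro v w p hp
    clear hp
    induction p with
    | nil => rfl
    | cons h _ ih => exact h.2.trans ih)

/-- The label of a coloring: its restriction to the terminal set `T`. -/
def csgLabelFun {W : Type*} (G : SimpleGraph W) (k : ℕ) (T : Set W) :
    {α : W → Fin k // IsColoring G k α} → (T → Fin k) :=
  fun α t => α.1 t.1

/-- The node set of the contracted solution graph: the label components. -/
abbrev CSGNode {W : Type*} (G : SimpleGraph W) (k : ℕ) (T : Set W) :=
  (sameLabelSub (colorGraph G k) (csgLabelFun G k T)).ConnectedComponent

/-- The contracted solution graph `C^c_k(G,T)`. -/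
def CSG {W : Type*} (G : SimpleGraph W) (k : ℕ) (T : Set W) : SimpleGraph (CSGNode G k T) :=
  quotGraph (colorGraph G k) (csgLabelFun G k T)

/-- The `γ`-node of the contracted solution graph: the label component containing `γ`. -/
def csgNode {W : Type*} (G : SimpleGraph W) (k : ℕ) (T : Set W)
    (γ : {α : W → Fin k // IsColoring G k α}) : CSGNode G k T :=
  (sameLabelSub (colorGraph G k) (csgLabelFun G k T)).connectedComponentMk γ

/-- The label of a node of the contracted solution graph: the common restriction
to `T` of its colorings. -/
def csgLabel {W : Type*} (G : SimpleGraph W) (k : ℕ) (T : Set W) :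
    CSGNode G k T → (T → Fin k) :=
  quotLabel (colorGraph G k) (csgLabelFun G k T)

/-- The restriction of a proper coloring to an induced subgraph. -/
def restrictColoring {W : Type*} (G : SimpleGraph W) (k : ℕ) (S : Set W)
    (γ : {α : W → Fin k // IsColoring G k α}) :
    {α : S → Fin k // IsColoring (G.induce S) k α} :=
  ⟨fun u => γ.1 u.1, fun u w h => γ.2 u.1 w.1 h⟩

/-- A graph is chordal if it contains no induced cycle of length greater than 3. -/
def Chordal {W : Type*} (G : SimpleGraph W) : Prop :=
  ∀ n : ℕ, 4 ≤ n → IsEmpty (SimpleGraph.cycleGraph n ↪g G)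

/-- `S` is a vertex cut: `G - S` is disconnected. -/
def IsVertexCut {W : Type*} (G : SimpleGraph W) (S : Set W) : Prop :=
  ¬ (G.induce Sᶜ).Preconnected

/-- `G` is `l`-connected. -/
def LConnected {W : Type*} (G : SimpleGraph W) (l : ℕ) : Prop :=
  G.Connected ∧ l + 1 ≤ Nat.card W ∧ ∀ S : Set W, IsVertexCut G S → l ≤ S.ncard

/-- A labeled graph `(H,ℓ)`, whose labels are `k`-colorings of the complete graph
on a vertex (type) `S`, is an `(|S|,k)`-color-complete graph. -/
def IsColorComplete {N S : Type*} (k : ℕ) (H : SimpleGraph N) (ℓ : N → S → Fin k) : Prop :=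
  (∀ x, Function.Injective (ℓ x)) ∧
  (∀ f : S → Fin k, Function.Injective f → ∃! x, ℓ x = f) ∧
  (∀ x y, H.Adj x y ↔ ∃! s, ℓ x s ≠ ℓ y s)

/-- The injective neighborhood property. -/
def INP {N L : Type*} (H : SimpleGraph N) (ℓ : N → L) : Prop :=
  ∀ u v w : N, H.Adj u v → H.Adj u w → v ≠ w → ℓ v ≠ ℓ w

/-- The weight `w(P)` of a walk `P` in a labeled graph: the sum over the vertices `x`
of `P` of the number of colors used by labels of neighbors of `x` in `P` but not by
the label of `x`. -/
noncomputable def walkWeight {N S : Type*} {k : ℕ} {G : SimpleGraph N} (ℓ : N → S → Fin k)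
    {a b : N} (P : G.Walk a b) : ℕ :=
  letI := Classical.decEq N
  ∑ x ∈ P.support.toFinset,
    ((⋃ y ∈ P.toSubgraph.neighborSet x, Set.range (ℓ y)) \ Set.range (ℓ x)).ncard

/-- The vertex set of `G - v`. -/
def delSet {V : Type*} (v : V) : Set V := {u | u ≠ v}

/-- The terminal set `T \ {v}`, viewed as a set of vertices of `G - v`. -/
def Tdel {V : Type*} (T : Set V) (v : V) : Set ↥(delSet v) := {u | u.1 ∈ T}

namespace SimpleGraph

variable {X : Type*} {H : SimpleGraph X}

lemma IsAcyclic.not_adj_of_adj_of_adj (hH : H.IsAcyclic) {a b c : X} (hab : H.Adj a b)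
    (hbc : H.Adj b c) : ¬ H.Adj c a := by
  intro hca
  obtain ⟨C⟩ := hH.colorable_two
  have h₁ := C.valid hab
  have h₂ := C.valid hbc
  have h₃ := C.valid hca
  omega

namespace Walk

variable {a b z : X}

lemma exists_toSubgraph_adj_of_not_nil {p : H.Walk a b} (hp : ¬ p.Nil) (hz : z ∈ p.support) :
    ∃ y, p.toSubgraph.Adj z y := by
  obtain ⟨e, he, hze⟩ := (mem_support_iff_exists_mem_edges_of_not_nil hp).mp hz
  induction e with
  | _ x y =>
    rcases Sym2.mem_iff.mp hze with rfl | rfl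
    · exact ⟨y, adj_toSubgraph_iff_mem_edges.mpr he⟩
    · exact ⟨x, adj_toSubgraph_iff_mem_edges.mpr (Sym2.eq_swap ▸ he)⟩

lemma IsPath.exists_toSubgraph_adj_of_ne {p : H.Walk a b} (hp : p.IsPath) (hz : z ∈ p.support)
    (ha : z ≠ a) (hb : z ≠ b) :
    ∃ y₁ y₂, y₁ ≠ y₂ ∧ p.toSubgraph.Adj z y₁ ∧ p.toSubgraph.Adj z y₂ := by
  obtain ⟨i, rfl, hi⟩ := mem_support_iff_exists_getVert.mp hz
  have hi0 : i ≠ 0 := by rintro rfl; exact ha p.getVert_zero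
  have hil : i < p.length := lt_of_le_of_ne hi (by rintro rfl; exact hb p.getVert_length)
  refine ⟨p.getVert (i - 1), p.getVert (i + 1), fun h => ?_, ?_, p.toSubgraph_adj_getVert hil⟩
  · have := hp.getVert_injOn (by rw [Set.mem_ofPred_eq]; omega) (by rw [Set.mem_ofPred_eq]; omega) h
    omega
  · have := p.toSubgraph_adj_getVert (show i - 1 < p.length by omega)
    rw [Nat.sub_add_cancel (Nat.one_le_iff_ne_zero.mpr hi0)] at this
    exact this.symm

lemma IsPath.ncard_neighborSet_toSubgraph_le_two {p : H.Walk a b} (hp : p.IsPath) (z : X) :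
    (p.toSubgraph.neighborSet z).ncard ≤ 2 := by
  rcases (p.toSubgraph.neighborSet z).eq_empty_or_nonempty with h | ⟨y, hy⟩
  · simp [h]
  have hnil : ¬ p.Nil := fun h => by
    simpa [edges_eq_nil.mpr h] using adj_toSubgraph_iff_mem_edges.mp hy
  obtain ⟨i, rfl, hi⟩ := mem_support_iff_exists_getVert.mp (mem_support_of_adj_toSubgraph hy)
  rcases Nat.eq_zero_or_pos i with rfl | hi0
  · simp [hp.neighborSet_toSubgraph_startpoint hnil]
  rcases hi.lt_or_eq with hil | rfl
  · rw [hp.ncard_neighborSet_toSubgraph_internal_eq_two hi0.ne' hil]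
  · simp [hp.neighborSet_toSubgraph_endpoint hnil]

end Walk

lemma IsAcyclic.toSubgraph_adj_of_isPath_start (hH : H.IsAcyclic) {x y b : X} {p : H.Walk x b}
    (hp : p.IsPath) (hy : y ∈ p.support) (hxy : H.Adj x y) : p.toSubgraph.Adj x y := by
  have hnil : ¬ p.Nil := fun h => hxy.ne' (by simpa [Walk.nil_iff_support_eq.mp h] using hy)
  rw [hH.eq_snd_of_adj_start hp hxy hy]
  exact p.toSubgraph_adj_snd hnil

lemma IsAcyclic.toSubgraph_adj_of_isPath [DecidableEq X] (hH : H.IsAcyclic) {a b x y : X}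
    {p : H.Walk a b} (hp : p.IsPath) (hx : x ∈ p.support) (hy : y ∈ p.support)
    (hxy : H.Adj x y) : p.toSubgraph.Adj x y := by
  have hy' : y ∈ (p.takeUntil x hx).support ∨ y ∈ (p.dropUntil x hx).support := by
    rw [← Walk.mem_support_append_iff, p.take_spec hx]
    exact hy
  simp only [Walk.adj_toSubgraph_iff_mem_edges]
  rcases hy' with hy' | hy'
  · have h := hH.toSubgraph_adj_of_isPath_start (hp.takeUntil hx).reverse
      (by rwa [Walk.support_reverse, List.mem_reverse]) hxy
    rw [Walk.toSubgraph_reverse, Walk.adj_toSubgraph_iff_mem_edges] at h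
    exact p.edges_takeUntil_subset_edges hx h
  · have h := hH.toSubgraph_adj_of_isPath_start (hp.dropUntil hx) hy' hxy
    rw [Walk.adj_toSubgraph_iff_mem_edges] at h
    exact p.edges_dropUntil_subset_edges hx h

section Projection

variable {Y : Type*} {K : SimpleGraph Y} {f : X → Y}

open Classical in
/-- The image of a walk under `f`, with the collapsed edges skipped. -/
noncomputable def Walk.project (f : X → Y)
    (hf : ∀ ⦃x x'⦄, H.Adj x x' → f x = f x' ∨ K.Adj (f x) (f x')) :
    ∀ {a b : X}, H.Walk a b → K.Walk (f a) (f b)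
  | _, _, .nil => .nil
  | a, _, .cons (v := m) h p =>
    if he : f a = f m then (p.project f hf).copy he.symm rfl
    else .cons ((hf h).resolve_left he) (p.project f hf)

variable {hf : ∀ ⦃x x'⦄, H.Adj x x' → f x = f x' ∨ K.Adj (f x) (f x')}
  {a b : X}

lemma Walk.mem_support_project {p : H.Walk a b} {z : X} (hz : z ∈ p.support) :
    f z ∈ (p.project f hf).support := by
  induction p with
  | nil => simp_all [Walk.project]
  | @cons x m y h p ih =>
    rw [support_cons, List.mem_cons] at hz
    unfold Walk.project
    split_ifs with he
    · rcases hz with rfl | hz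
      · simp [he]
      · simp [ih hz]
    · rcases hz with rfl | hz
      · simp
      · simp [ih hz]

lemma Walk.exists_mem_support_of_mem_support_project {p : H.Walk a b} {d : Y}
    (hd : d ∈ (p.project f hf).support) : ∃ z ∈ p.support, f z = d := by
  induction p with
  | nil => simp_all [Walk.project]
  | @cons x m y h p ih =>
    unfold Walk.project at hd
    split_ifs at hd with he
    · obtain ⟨z, hz, rfl⟩ := ih (by simpa using hd)
      exact ⟨z, List.mem_cons_of_mem _ hz, rfl⟩
    · rw [support_cons, List.mem_cons] at hd
      rcases hd with rfl | hd
      · exact ⟨x, start_mem_support _, rfl⟩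
      · obtain ⟨z, hz, rfl⟩ := ih hd
        exact ⟨z, List.mem_cons_of_mem _ hz, rfl⟩

lemma Walk.exists_toSubgraph_adj_of_toSubgraph_adj_project {p : H.Walk a b} {d e : Y}
    (hde : (p.project f hf).toSubgraph.Adj d e) :
    ∃ x y, p.toSubgraph.Adj x y ∧ f x = d ∧ f y = e := by
  simp only [adj_toSubgraph_iff_mem_edges] at hde ⊢
  induction p with
  | nil => simp [Walk.project] at hde
  | @cons x m y h p ih =>
    unfold Walk.project at hde
    split_ifs at hde with he
    · obtain ⟨z, w, hzw, rfl, rfl⟩ := ih (by simpa using hde)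
      exact ⟨z, w, List.mem_cons_of_mem _ hzw, rfl, rfl⟩
    rw [edges_cons, List.mem_cons] at hde
    rcases hde with hde | hde
    · rcases Sym2.eq_iff.mp hde with ⟨rfl, rfl⟩ | ⟨rfl, rfl⟩
      · exact ⟨x, m, List.mem_cons_self, rfl, rfl⟩
      · exact ⟨m, x, by simp, rfl, rfl⟩
    · obtain ⟨z, w, hzw, rfl, rfl⟩ := ih hde
      exact ⟨z, w, List.mem_cons_of_mem _ hzw, rfl, rfl⟩

lemma Walk.IsPath.project (hH : H.IsAcyclic)
    (hfib : ∀ ⦃x x'⦄, x ≠ x' → f x = f x' → H.Adj x x') {p : H.Walk a b} (hp : p.IsPath) :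
    (p.project f hf).IsPath := by
  induction p with
  | nil => exact IsPath.nil
  | @cons x m y h p ih =>
    have hpx := (cons_isPath_iff h p).mp hp
    unfold Walk.project
    split_ifs with he
    · simpa using ih hpx.1
    refine (cons_isPath_iff _ _).mpr ⟨ih hpx.1, fun hx => ?_⟩
    obtain ⟨z, hz, hzx⟩ := exists_mem_support_of_mem_support_project hx
    have hxz : H.Adj x z := hfib (fun h => hpx.2 (h ▸ hz)) hzx.symm
    have hzm := hH.eq_snd_of_adj_start hp hxz (List.mem_cons_of_mem _ hz)
    simp only [snd_cons] at hzm
    exact he (hzm ▸ hzx.symm)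

lemma IsAcyclic.card_filter_eq_le_two [DecidableEq Y] (hH : H.IsAcyclic)
    (hfib : ∀ ⦃x x'⦄, x ≠ x' → f x = f x' → H.Adj x x') (s : Finset X) (d : Y) :
    (s.filter (f · = d)).card ≤ 2 := by
  by_contra! h
  obtain ⟨x, hx, y, hy, z, hz, hxy, hxz, hyz⟩ := Finset.two_lt_card.mp h
  simp only [Finset.mem_filter] at hx hy hz
  exact hH.not_adj_of_adj_of_adj (hfib hxy (hx.2.trans hy.2.symm))
    (hfib hyz (hy.2.trans hz.2.symm)) (hfib hxz.symm (hz.2.trans hx.2.symm))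

/-- The two edges of the projection at `d` lift to edges of `p` at distinct vertices, since a
vertex of a path in a forest is adjacent on the path to the other vertex over `d` and has at most
two neighbours there. -/
lemma IsAcyclic.exists_adj_of_mem_support_project [DecidableEq X] (hH : H.IsAcyclic)
    (hfib : ∀ ⦃x x'⦄, x ≠ x' → f x = f x' → H.Adj x x') {p : H.Walk a b} (hp : p.IsPath)
    {d : Y} (hd : d ∈ (p.project f hf).support) (hda : d ≠ f a) (hdb : d ≠ f b) {z z' : X}
    (hz : z ∈ p.support) (hz' : z' ∈ p.support) (hzz' : z ≠ z') (hfz : f z = d)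
    (hfz' : f z' = d) :
    ∃ z₁ z₂ w₁ w₂, z₁ ≠ z₂ ∧ f z₁ = d ∧ f z₂ = d ∧ H.Adj z₁ w₁ ∧ H.Adj z₂ w₂ ∧
      (p.project f hf).toSubgraph.Adj d (f w₁) ∧ (p.project f hf).toSubgraph.Adj d (f w₂) := by
  obtain ⟨d₁, d₂, hd₁₂, hd₁, hd₂⟩ := (hp.project hH hfib).exists_toSubgraph_adj_of_ne hd hda hdb
  obtain ⟨z₁, w₁, hzw₁, hz₁, rfl⟩ := Walk.exists_toSubgraph_adj_of_toSubgraph_adj_project hd₁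
  obtain ⟨z₂, w₂, hzw₂, hz₂, rfl⟩ := Walk.exists_toSubgraph_adj_of_toSubgraph_adj_project hd₂
  refine ⟨z₁, z₂, w₁, w₂, ?_, hz₁, hz₂, hzw₁.adj_sub, hzw₂.adj_sub, hd₁, hd₂⟩
  rintro rfl
  obtain ⟨z'', hz'', hz''₁, hfz''⟩ : ∃ z'' ∈ p.support, z'' ≠ z₁ ∧ f z'' = d := by
    by_cases h : z = z₁
    · exact ⟨z', hz', h ▸ hzz'.symm, hfz'⟩
    · exact ⟨z, hz, h, hfz⟩
  have hzz'' : p.toSubgraph.Adj z₁ z'' :=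
    hH.toSubgraph_adj_of_isPath hp (Walk.mem_support_of_adj_toSubgraph hzw₁) hz''
      (hfib hz''₁.symm (hz₁.trans hfz''.symm))
  have hsub : ({w₁, w₂, z''} : Set X) ⊆ p.toSubgraph.neighborSet z₁ := by
    rintro w (rfl | rfl | rfl)
    exacts [hzw₁, hzw₂, hzz'']
  have h3 : ({w₁, w₂, z''} : Set X).ncard = 3 :=
    Set.ncard_eq_three.mpr ⟨w₁, w₂, z'', fun h => hd₁₂ (congrArg f h),
      fun h => hd₁.ne.symm (h ▸ hfz''), fun h => hd₂.ne.symm (h ▸ hfz''), rfl⟩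
  have := Set.ncard_le_ncard hsub p.finite_neighborSet_toSubgraph
  have := hp.ncard_neighborSet_toSubgraph_le_two z₁
  omega

lemma exists_walk_of_apply_eq (hfib : ∀ ⦃x x'⦄, x ≠ x' → f x = f x' → H.Adj x x') {x x' : X}
    (h : f x = f x') : ∃ U : H.Walk x x', ∀ e ∈ U.edges, (e.map f).IsDiag := by
  by_cases hxx' : x = x'
  · subst hxx'
    exact ⟨Walk.nil, by simp⟩
  · exact ⟨(hfib hxx' h).toWalk, by simp [h]⟩

lemma Walk.exists_lift (hfib : ∀ ⦃x x'⦄, x ≠ x' → f x = f x' → H.Adj x x')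
    (hlift : ∀ ⦃y y'⦄, K.Adj y y' → ∃ x x', f x = y ∧ f x' = y' ∧ H.Adj x x')
    {y y' : Y} (W : K.Walk y y') {x : X} (hx : f x = y) :
    ∃ x', f x' = y' ∧ ∃ U : H.Walk x x', ∀ e ∈ U.edges, (e.map f).IsDiag ∨ e.map f ∈ W.edges := by
  induction W generalizing x with
  | nil => exact ⟨x, hx, Walk.nil, by simp⟩
  | @cons y m y' h W ih =>
    obtain ⟨a, b, rfl, rfl, hab⟩ := hlift h
    obtain ⟨U₀, hU₀⟩ := exists_walk_of_apply_eq hfib hx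
    obtain ⟨x', hx', U₁, hU₁⟩ := ih (x := b) rfl
    refine ⟨x', hx', U₀.append (cons hab U₁), fun e he => ?_⟩
    simp only [edges_append, edges_cons, List.mem_append, List.mem_cons] at he
    rcases he with he | rfl | he
    · exact Or.inl (hU₀ e he)
    · exact Or.inr (by simp)
    · exact (hU₁ e he).imp_right (List.mem_cons_of_mem _)

/-- `K` is the contraction of the forest `H` along the cliques `f ⁻¹' {y}`: a walk in `K` avoiding
an edge lifts to a walk in `H` avoiding a lift of that edge. -/
theorem IsAcyclic.of_lift (hH : H.IsAcyclic)
    (hfib : ∀ ⦃x x'⦄, x ≠ x' → f x = f x' → H.Adj x x')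
    (hlift : ∀ ⦃y y'⦄, K.Adj y y' → ∃ x x', f x = y ∧ f x' = y' ∧ H.Adj x x') :
    K.IsAcyclic := by
  refine isAcyclic_iff_forall_adj_isBridge.mpr fun y y' hyy' => ?_
  refine isBridge_iff_forall_walk_mem_edges.mpr fun W => ?_
  by_contra hW
  obtain ⟨x, x', rfl, rfl, hxx'⟩ := hlift hyy'
  obtain ⟨x'', hx'', U₁, hU₁⟩ := Walk.exists_lift hfib hlift W.reverse rfl
  obtain ⟨U₂, hU₂⟩ := exists_walk_of_apply_eq hfib hx''
  have hU : ∀ e ∈ (U₁.append U₂).edges, (e.map f).IsDiag ∨ e.map f ∈ W.edges := by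
    intro e he
    rw [Walk.edges_append, List.mem_append] at he
    rcases he with he | he
    · simpa using hU₁ e he
    · exact Or.inl (hU₂ e he)
  have hxx'U := isBridge_iff_forall_walk_mem_edges.mp
    (isAcyclic_iff_forall_adj_isBridge.mp hH hxx') (U₁.append U₂).reverse
  rw [Walk.edges_reverse, List.mem_reverse] at hxx'U
  rcases hU _ hxx'U with h | h
  · exact hyy'.ne (by simpa using h)
  · exact hW (by simpa using h)

end Projection

end SimpleGraph

section Weight

variable {N S : Type*} {k : ℕ} {H : SimpleGraph N} (ℓ : N → S → Fin k) {a b : N}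

/-- The colours that the labels of the neighbours of `x` on `P` add to the label of `x`;
`w_P(x)` is their number. -/
def newColors (P : H.Walk a b) (x : N) : Set (Fin k) :=
  (⋃ y ∈ P.toSubgraph.neighborSet x, Set.range (ℓ y)) \ Set.range (ℓ x)

variable {ℓ}

lemma walkWeight_eq_sum [DecidableEq N] (P : H.Walk a b) :
    walkWeight ℓ P = ∑ x ∈ P.support.toFinset, (newColors ℓ P x).ncard := by
  unfold walkWeight newColors
  congr!

lemma mem_newColors {P : H.Walk a b} {x y : N} (hxy : P.toSubgraph.Adj x y) {c : Fin k}
    (hcy : c ∈ Set.range (ℓ y)) (hcx : c ∉ Set.range (ℓ x)) : c ∈ newColors ℓ P x :=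
  ⟨Set.mem_iUnion₂.mpr ⟨y, hxy, hcy⟩, hcx⟩

lemma newColors_subset_compl (ℓ : N → S → Fin k) (P : H.Walk a b) (x : N) :
    newColors ℓ P x ⊆ (Set.range (ℓ x))ᶜ :=
  fun _ hc => hc.2

lemma walkWeight_eq_zero_of_nil {P : H.Walk a b} (hP : P.Nil) : walkWeight ℓ P = 0 := by
  classical
  rw [walkWeight_eq_sum]
  refine Finset.sum_eq_zero fun x _ => ?_
  simp [newColors, Walk.adj_toSubgraph_iff_mem_edges, Walk.edges_eq_nil.mpr hP]

end Weight

section ContractedSolutionGraph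

variable {W : Type*} {G : SimpleGraph W} {k : ℕ} {T : Set W}

lemma csgNode_eq_of_adj {γ δ : {f : W → Fin k // IsColoring G k f}}
    (h : (sameLabelSub (colorGraph G k) (csgLabelFun G k T)).Adj γ δ) :
    csgNode G k T γ = csgNode G k T δ :=
  ConnectedComponent.eq.mpr h.reachable

lemma csgLabel_injective (hT : G.IsClique T) (x : CSGNode G k T) :
    Function.Injective (csgLabel G k T x) := by
  induction x using ConnectedComponent.ind with
  | _ γ =>
    intro t₁ t₂ h
    by_contra hne
    exact γ.2 t₁ t₂ (hT t₁.2 t₂.2 fun h' => hne (Subtype.ext h')) h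

lemma ncard_range_csgLabel (hT : G.IsClique T) (x : CSGNode G k T) :
    (Set.range (csgLabel G k T x)).ncard = T.ncard := by
  rw [← Set.image_univ, Set.ncard_image_of_injective _ (csgLabel_injective hT x),
    Set.ncard_univ, Nat.card_coe_set_eq]

lemma ncard_compl_range_csgLabel (hT : G.IsClique T) (x : CSGNode G k T) :
    (Set.range (csgLabel G k T x))ᶜ.ncard = k - T.ncard := by
  rw [Set.ncard_compl, ncard_range_csgLabel hT, Nat.card_eq_fintype_card, Fintype.card_fin]

lemma exists_of_csg_adj (hT : G.IsClique T) {x y : CSGNode G k T} (h : (CSG G k T).Adj x y) :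
    ∃ (γ δ : {f : W → Fin k // IsColoring G k f}) (t : W), t ∈ T ∧
      csgNode G k T γ = x ∧ csgNode G k T δ = y ∧ (∀ u, u ≠ t → γ.1 u = δ.1 u) ∧
      γ.1 t ≠ δ.1 t ∧ δ.1 t ∉ Set.range (csgLabel G k T x) := by
  obtain ⟨hne, γ, δ, rfl, rfl, t, hts, huniq⟩ := h
  have hoth : ∀ u, u ≠ t → γ.1 u = δ.1 u := fun u hu => by
    by_contra h
    exact hu (huniq u h)
  have ht : t ∈ T := by
    by_contra htT
    refine hne (csgNode_eq_of_adj ⟨⟨t, hts, huniq⟩, funext fun t' => ?_⟩)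
    exact hoth t'.1 fun h => htT (h ▸ t'.2)
  refine ⟨γ, δ, t, ht, rfl, rfl, hoth, hts, ?_⟩
  rintro ⟨t', ht'⟩
  change γ.1 t' = δ.1 t at ht'
  by_cases htt' : (t' : W) = t
  · exact hts (htt' ▸ ht')
  · rw [hoth t' htt'] at ht'
    exact δ.2 t' t (hT t'.2 ht htt') ht'

lemma exists_mem_range_notMem_range_of_csg_adj (hT : G.IsClique T) {x y : CSGNode G k T}
    (h : (CSG G k T).Adj x y) :
    ∃ c ∈ Set.range (csgLabel G k T y), c ∉ Set.range (csgLabel G k T x) := by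
  obtain ⟨γ, δ, t, ht, rfl, rfl, -, -, hnew⟩ := exists_of_csg_adj hT h
  exact ⟨δ.1 t, ⟨⟨t, ht⟩, rfl⟩, hnew⟩

lemma ncard_lt_of_csg_adj (hT : G.IsClique T) {x y : CSGNode G k T} (h : (CSG G k T).Adj x y) :
    T.ncard < k := by
  obtain ⟨c, -, hc⟩ := exists_mem_range_notMem_range_of_csg_adj hT h
  have : 0 < (Set.range (csgLabel G k T x))ᶜ.ncard := (Set.ncard_pos).mpr ⟨c, hc⟩
  rw [ncard_compl_range_csgLabel hT] at this
  omega

variable {a b : CSGNode G k T}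

lemma one_le_ncard_newColors (hT : G.IsClique T) {P : (CSG G k T).Walk a b} (hP : ¬ P.Nil)
    {x : CSGNode G k T} (hx : x ∈ P.support) : 1 ≤ (newColors (csgLabel G k T) P x).ncard := by
  obtain ⟨y, hxy⟩ := P.exists_toSubgraph_adj_of_not_nil hP hx
  obtain ⟨c, hcy, hcx⟩ := exists_mem_range_notMem_range_of_csg_adj hT hxy.adj_sub
  exact (Set.ncard_pos).mpr ⟨c, mem_newColors hxy hcy hcx⟩

lemma walkWeight_eq_length_add_one (hT : G.IsClique T) (hk : T.ncard + 1 = k)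
    {P : (CSG G k T).Walk a b} (hP : P.IsPath) (hnil : ¬ P.Nil) :
    walkWeight (csgLabel G k T) P = P.length + 1 := by
  classical
  have hone : ∀ x ∈ P.support.toFinset, (newColors (csgLabel G k T) P x).ncard = 1 := by
    intro x hx
    have hle := Set.ncard_le_ncard (newColors_subset_compl (csgLabel G k T) P x)
    rw [ncard_compl_range_csgLabel hT] at hle
    have := one_le_ncard_newColors hT hnil (List.mem_toFinset.mp hx)
    omega
  rw [walkWeight_eq_sum, Finset.sum_congr rfl hone, Finset.sum_const, smul_eq_mul, mul_one,
    List.toFinset_card_of_nodup hP.support_nodup, Walk.length_support]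

end ContractedSolutionGraph

section Restriction

variable {V : Type*} {G : SimpleGraph V} {k : ℕ} {T : Set V} {v : V}

lemma restrictColoring_eq_of_forall_ne {γ δ : {f : V → Fin k // IsColoring G k f}}
    (h : ∀ u, u ≠ v → γ.1 u = δ.1 u) :
    restrictColoring G k (delSet v) γ = restrictColoring G k (delSet v) δ :=
  Subtype.ext (funext fun u => h u u.2)

lemma csgNode_restrictColoring_eq_of_adj (hv : v ∈ T) {γ δ : {f : V → Fin k // IsColoring G k f}}
    (h : (sameLabelSub (colorGraph G k) (csgLabelFun G k T)).Adj γ δ) :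
    csgNode (G.induce (delSet v)) k (Tdel T v) (restrictColoring G k (delSet v) γ) =
      csgNode (G.induce (delSet v)) k (Tdel T v) (restrictColoring G k (delSet v) δ) := by
  obtain ⟨⟨w, hw, huniq⟩, hlab⟩ := h
  have hwT : w ∉ T := fun hwT => hw (congrFun hlab ⟨w, hwT⟩)
  refine csgNode_eq_of_adj ⟨⟨⟨w, fun h => hwT (h ▸ hv)⟩, hw, fun u hu => Subtype.ext (huniq u hu)⟩,
    funext fun t => congrFun hlab ⟨t.1.1, t.2⟩⟩

def restrictNode (G : SimpleGraph V) (k : ℕ) (T : Set V) (v : V) (hv : v ∈ T) :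
    CSGNode G k T → CSGNode (G.induce (delSet v)) k (Tdel T v) :=
  ConnectedComponent.lift
    (fun γ => csgNode (G.induce (delSet v)) k (Tdel T v) (restrictColoring G k (delSet v) γ))
    (fun _ _ p hp => by
      clear hp
      induction p with
      | nil => rfl
      | cons h _ ih => exact (csgNode_restrictColoring_eq_of_adj hv h).trans ih)

@[simp] lemma restrictNode_csgNode (hv : v ∈ T) (γ : {f : V → Fin k // IsColoring G k f}) :
    restrictNode G k T v hv (csgNode G k T γ) =
      csgNode (G.induce (delSet v)) k (Tdel T v) (restrictColoring G k (delSet v) γ) := rfl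

lemma Tdel_isClique (hT : G.IsClique T) : (G.induce (delSet v)).IsClique (Tdel T v) :=
  fun _ ha _ hb hne => hT ha hb fun h => hne (Subtype.ext h)

lemma csgLabel_self_notMem_range_restrictNode (hT : G.IsClique T) (hv : v ∈ T)
    (x : CSGNode G k T) :
    csgLabel G k T x ⟨v, hv⟩ ∉
      Set.range (csgLabel (G.induce (delSet v)) k (Tdel T v) (restrictNode G k T v hv x)) := by
  induction x using ConnectedComponent.ind with
  | _ γ =>
    rintro ⟨t, ht⟩
    exact γ.2 v t.1.1 (hT hv t.2 (Ne.symm t.1.2)) ht.symm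

lemma restrictNode_eq_or_adj_of_adj (hT : G.IsClique T) (hv : v ∈ T) {x y : CSGNode G k T}
    (h : (CSG G k T).Adj x y) :
    restrictNode G k T v hv x = restrictNode G k T v hv y ∨
      (CSG (G.induce (delSet v)) k (Tdel T v)).Adj
        (restrictNode G k T v hv x) (restrictNode G k T v hv y) := by
  obtain ⟨γ, δ, t, ht, rfl, rfl, hoth, hts, -⟩ := exists_of_csg_adj hT h
  by_cases htv : t = v
  · left
    rw [restrictNode_csgNode, restrictNode_csgNode,
      restrictColoring_eq_of_forall_ne fun u hu => hoth u (htv ▸ hu)]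
  · right
    refine ⟨fun hc => hts (congrFun (congrArg (csgLabel _ k _) hc) ⟨⟨t, htv⟩, ht⟩), _, _, rfl, rfl,
      ⟨t, htv⟩, hts, fun u hu => ?_⟩
    by_contra hne
    exact hu (hoth u fun h => hne (Subtype.ext h))

lemma csgLabel_self_eq_of_adj_of_restrictNode_ne (hT : G.IsClique T) (hv : v ∈ T)
    {x y : CSGNode G k T} (h : (CSG G k T).Adj x y)
    (hne : restrictNode G k T v hv x ≠ restrictNode G k T v hv y) :
    csgLabel G k T x ⟨v, hv⟩ = csgLabel G k T y ⟨v, hv⟩ := by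
  obtain ⟨γ, δ, t, ht, rfl, rfl, hoth, -, -⟩ := exists_of_csg_adj hT h
  by_cases htv : t = v
  · exfalso
    apply hne
    rw [restrictNode_csgNode, restrictNode_csgNode,
      restrictColoring_eq_of_forall_ne fun u hu => hoth u (htv ▸ hu)]
  · exact hoth v (Ne.symm htv)

end Restriction

section Extension

variable {V : Type*} [DecidableEq V] {G : SimpleGraph V} {k : ℕ} {T : Set V} {v : V}

def extendByColor (v : V) (δ : delSet v → Fin k) (c : Fin k) : V → Fin k :=
  fun u => if h : u = v then c else δ ⟨u, h⟩

@[simp] lemma extendByColor_self (δ : delSet v → Fin k) (c : Fin k) :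
    extendByColor v δ c v = c := dif_pos rfl

lemma extendByColor_of_ne (δ : delSet v → Fin k) (c : Fin k) {u : V} (hu : u ≠ v) :
    extendByColor v δ c u = δ ⟨u, hu⟩ := dif_neg hu

lemma extendByColor_restrictColoring (γ : {f : V → Fin k // IsColoring G k f}) :
    extendByColor v (restrictColoring G k (delSet v) γ).1 (γ.1 v) = γ.1 := by
  funext u
  by_cases hu : u = v
  · subst hu
    exact extendByColor_self _ _
  · exact extendByColor_of_ne _ _ hu

lemma restrictColoring_extendByColor {δ : delSet v → Fin k} {c : Fin k}
    (h : IsColoring G k (extendByColor v δ c)) :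
    (restrictColoring G k (delSet v) ⟨extendByColor v δ c, h⟩).1 = δ :=
  funext fun u => extendByColor_of_ne δ c u.2

lemma restrictNode_csgNode_extendByColor (hv : v ∈ T)
    (δ : {f : delSet v → Fin k // IsColoring (G.induce (delSet v)) k f}) {c : Fin k}
    (h : IsColoring G k (extendByColor v δ.1 c)) :
    restrictNode G k T v hv (csgNode G k T ⟨extendByColor v δ.1 c, h⟩) =
      csgNode (G.induce (delSet v)) k (Tdel T v) δ :=
  congrArg _ (Subtype.ext (restrictColoring_extendByColor h))

/-- Since `N(v) = T ∖ {v}`, whether `c` can be given to `v` depends only on the label. -/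
lemma isColoring_extendByColor_iff (hT : G.IsClique T) (hv : v ∈ T)
    (hN : ∀ u : V, G.Adj v u → u ∈ T)
    (δ : {f : delSet v → Fin k // IsColoring (G.induce (delSet v)) k f}) (c : Fin k) :
    IsColoring G k (extendByColor v δ.1 c) ↔
      c ∉ Set.range (csgLabel (G.induce (delSet v)) k (Tdel T v)
        (csgNode (G.induce (delSet v)) k (Tdel T v) δ)) := by
  constructor
  · rintro hcol ⟨t, ht⟩
    have := hcol v t.1.1 (hT hv t.2 (Ne.symm t.1.2))
    rw [extendByColor_self, extendByColor_of_ne _ _ t.1.2] at this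
    exact this ht.symm
  · intro hc u w huw
    have key : ∀ u, G.Adj v u → extendByColor v δ.1 c v ≠ extendByColor v δ.1 c u := by
      intro u hvu h
      rw [extendByColor_self, extendByColor_of_ne _ _ hvu.ne'] at h
      exact hc ⟨⟨⟨u, hvu.ne'⟩, hN u hvu⟩, h.symm⟩
    by_cases hu : u = v
    · subst hu
      exact key w huw
    by_cases hw : w = v
    · subst hw
      exact (key u huw.symm).symm
    rw [extendByColor_of_ne _ _ hu, extendByColor_of_ne _ _ hw]
    exact δ.2 ⟨u, hu⟩ ⟨w, hw⟩ huw

lemma sameLabelSub_adj_extendByColor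
    {δ₁ δ₂ : {f : delSet v → Fin k // IsColoring (G.induce (delSet v)) k f}}
    (h : (sameLabelSub (colorGraph (G.induce (delSet v)) k)
      (csgLabelFun (G.induce (delSet v)) k (Tdel T v))).Adj δ₁ δ₂)
    {c : Fin k} (h₁ : IsColoring G k (extendByColor v δ₁.1 c))
    (h₂ : IsColoring G k (extendByColor v δ₂.1 c)) :
    (sameLabelSub (colorGraph G k) (csgLabelFun G k T)).Adj
      ⟨extendByColor v δ₁.1 c, h₁⟩ ⟨extendByColor v δ₂.1 c, h₂⟩ := by
  obtain ⟨⟨w, hw, huniq⟩, hlab⟩ := h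
  have hext : ∀ u (hu : u ≠ v), extendByColor v δ₁.1 c u = extendByColor v δ₂.1 c u ↔
      δ₁.1 ⟨u, hu⟩ = δ₂.1 ⟨u, hu⟩ := fun u hu => by
    rw [extendByColor_of_ne _ _ hu, extendByColor_of_ne _ _ hu]
  refine ⟨⟨w.1, fun h => hw ((hext w.1 w.2).mp h), fun u hu => ?_⟩, funext fun t => ?_⟩
  · have huv : u ≠ v := fun h => hu (by subst h; simp)
    exact congrArg Subtype.val (huniq ⟨u, huv⟩ fun h => hu ((hext u huv).mpr h))
  · by_cases htv : t.1 = v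
    · change extendByColor v δ₁.1 c t.1 = extendByColor v δ₂.1 c t.1
      simp [htv]
    · exact (hext t.1 htv).mpr (congrFun hlab ⟨⟨t.1, htv⟩, t.2⟩)

lemma csgNode_extendByColor_eq (hT : G.IsClique T) (hv : v ∈ T)
    (hN : ∀ u : V, G.Adj v u → u ∈ T)
    {δ₁ δ₂ : {f : delSet v → Fin k // IsColoring (G.induce (delSet v)) k f}}
    (h : csgNode (G.induce (delSet v)) k (Tdel T v) δ₁ =
      csgNode (G.induce (delSet v)) k (Tdel T v) δ₂)
    {c : Fin k} (h₁ : IsColoring G k (extendByColor v δ₁.1 c))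
    (h₂ : IsColoring G k (extendByColor v δ₂.1 c)) :
    csgNode G k T ⟨extendByColor v δ₁.1 c, h₁⟩ = csgNode G k T ⟨extendByColor v δ₂.1 c, h₂⟩ := by
  obtain ⟨p⟩ := ConnectedComponent.exact h
  induction p with
  | nil => rfl
  | @cons δ₁ δ δ₂ hadj p ih =>
    have hδ : IsColoring G k (extendByColor v δ.1 c) := by
      rw [isColoring_extendByColor_iff hT hv hN] at h₁ ⊢
      rwa [← csgNode_eq_of_adj hadj]
    exact (csgNode_eq_of_adj (sameLabelSub_adj_extendByColor hadj h₁ hδ)).trans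
      (ih (csgNode_eq_of_adj hadj ▸ h) hδ h₂)

lemma csgNode_eq_of_restrictColoring_eq (hT : G.IsClique T) (hv : v ∈ T)
    (hN : ∀ u : V, G.Adj v u → u ∈ T) {γ δ : {f : V → Fin k // IsColoring G k f}}
    (hres : csgNode (G.induce (delSet v)) k (Tdel T v) (restrictColoring G k (delSet v) γ) =
      csgNode (G.induce (delSet v)) k (Tdel T v) (restrictColoring G k (delSet v) δ))
    (hγδ : γ.1 v = δ.1 v) :
    csgNode G k T γ = csgNode G k T δ := by
  have hγ : IsColoring G k (extendByColor v (restrictColoring G k (delSet v) γ).1 (γ.1 v)) := by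
    rw [extendByColor_restrictColoring]
    exact γ.2
  have hδ : IsColoring G k (extendByColor v (restrictColoring G k (delSet v) δ).1 (γ.1 v)) := by
    rw [hγδ, extendByColor_restrictColoring]
    exact δ.2
  calc csgNode G k T γ = csgNode G k T ⟨_, hγ⟩ :=
        congrArg _ (Subtype.ext (extendByColor_restrictColoring γ).symm)
    _ = csgNode G k T ⟨_, hδ⟩ := csgNode_extendByColor_eq hT hv hN hres hγ hδ
    _ = csgNode G k T δ :=
        congrArg _ (Subtype.ext (by simp only [hγδ]; exact extendByColor_restrictColoring δ))

lemma csgLabel_self_ne_of_restrictNode_eq (hT : G.IsClique T) (hv : v ∈ T)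
    (hN : ∀ u : V, G.Adj v u → u ∈ T) {x y : CSGNode G k T} (hne : x ≠ y)
    (hres : restrictNode G k T v hv x = restrictNode G k T v hv y) :
    csgLabel G k T x ⟨v, hv⟩ ≠ csgLabel G k T y ⟨v, hv⟩ := by
  induction x using ConnectedComponent.ind with
  | _ γ =>
  induction y using ConnectedComponent.ind with
  | _ δ => exact fun h => hne (csgNode_eq_of_restrictColoring_eq hT hv hN hres h)

lemma adj_of_restrictNode_eq (hT : G.IsClique T) (hv : v ∈ T)
    (hN : ∀ u : V, G.Adj v u → u ∈ T) {x y : CSGNode G k T} (hne : x ≠ y)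
    (hres : restrictNode G k T v hv x = restrictNode G k T v hv y) :
    (CSG G k T).Adj x y := by
  have hvc := csgLabel_self_ne_of_restrictNode_eq hT hv hN hne hres
  have hfree := csgLabel_self_notMem_range_restrictNode hT hv y
  induction x using ConnectedComponent.ind with
  | _ γ =>
  induction y using ConnectedComponent.ind with
  | _ δ =>
  rw [← hres] at hfree
  have hγ' : IsColoring G k (extendByColor v (restrictColoring G k (delSet v) γ).1 (δ.1 v)) :=
    (isColoring_extendByColor_iff hT hv hN _ _).mpr hfree
  refine ⟨hne, γ, ⟨_, hγ'⟩, rfl, ?_, v, ?_, fun u hu => ?_⟩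
  · exact csgNode_eq_of_restrictColoring_eq hT hv hN
      ((congrArg _ (Subtype.ext (restrictColoring_extendByColor hγ'))).trans hres)
      (extendByColor_self _ _)
  · change γ.1 v ≠ extendByColor v _ (δ.1 v) v
    rw [extendByColor_self]
    exact hvc
  · by_contra huv
    exact hu (extendByColor_of_ne (restrictColoring G k (delSet v) γ).1 (δ.1 v) huv).symm

lemma csg_adj_extendByColor (hv : v ∈ T)
    {δ₁ δ₂ : {f : delSet v → Fin k // IsColoring (G.induce (delSet v)) k f}} {t : delSet v}
    (ht : t ∈ Tdel T v) (hδt : δ₁.1 t ≠ δ₂.1 t) (hδ : ∀ u, u ≠ t → δ₁.1 u = δ₂.1 u) {c : Fin k}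
    (h₁ : IsColoring G k (extendByColor v δ₁.1 c)) (h₂ : IsColoring G k (extendByColor v δ₂.1 c)) :
    (CSG G k T).Adj (csgNode G k T ⟨extendByColor v δ₁.1 c, h₁⟩)
      (csgNode G k T ⟨extendByColor v δ₂.1 c, h₂⟩) := by
  have hext : ∀ u (hu : u ≠ v), extendByColor v δ₁.1 c u = extendByColor v δ₂.1 c u ↔
      δ₁.1 ⟨u, hu⟩ = δ₂.1 ⟨u, hu⟩ := fun u hu => by
    rw [extendByColor_of_ne _ _ hu, extendByColor_of_ne _ _ hu]
  have htne : extendByColor v δ₁.1 c t.1 ≠ extendByColor v δ₂.1 c t.1 :=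
    fun h => hδt ((hext t.1 t.2).mp h)
  refine ⟨fun h => htne (congrFun (congrArg (csgLabel G k T) h) ⟨t.1, ht⟩), _, _, rfl, rfl,
    t.1, htne, fun u hu => ?_⟩
  by_contra hut
  by_cases huv : u = v
  · subst huv
    exact hu (by simp)
  · exact hu ((hext u huv).mpr (hδ ⟨u, huv⟩ fun h => hut (congrArg Subtype.val h)))

/-- The two labels together use only `k - 1` colours; `v` gets a remaining one. -/
lemma exists_adj_restrictNode_of_adj (hT : G.IsClique T) (hv : v ∈ T)
    (hN : ∀ u : V, G.Adj v u → u ∈ T) (hcard : (Tdel T v).ncard + 2 = k)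
    {d m : CSGNode (G.induce (delSet v)) k (Tdel T v)}
    (h : (CSG (G.induce (delSet v)) k (Tdel T v)).Adj d m) :
    ∃ x y, restrictNode G k T v hv x = d ∧ restrictNode G k T v hv y = m ∧
      (CSG G k T).Adj x y := by
  obtain ⟨δ₁, δ₂, t, ht, rfl, rfl, hδ, hδt, -⟩ := exists_of_csg_adj (Tdel_isClique hT) h
  set L := Set.range (csgLabel (G.induce (delSet v)) k (Tdel T v)
    (csgNode (G.induce (delSet v)) k (Tdel T v) δ₁))
  have hsub : Set.range (csgLabel (G.induce (delSet v)) k (Tdel T v)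
      (csgNode (G.induce (delSet v)) k (Tdel T v) δ₂)) ⊆ insert (δ₂.1 t) L := by
    rintro _ ⟨t', rfl⟩
    by_cases htt' : t'.1 = t
    · exact Or.inl (congrArg δ₂.1 htt')
    · exact Or.inr ⟨t', hδ t'.1 htt'⟩
  obtain ⟨c, hc⟩ : (insert (δ₂.1 t) L)ᶜ.Nonempty := by
    rw [← Set.ncard_pos, Set.ncard_compl, Nat.card_eq_fintype_card, Fintype.card_fin]
    have := Set.ncard_insert_le (δ₂.1 t) L
    rw [ncard_range_csgLabel (Tdel_isClique hT)] at this
    omega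
  have h₁ : IsColoring G k (extendByColor v δ₁.1 c) :=
    (isColoring_extendByColor_iff hT hv hN δ₁ c).mpr fun h => hc (Or.inr h)
  have h₂ : IsColoring G k (extendByColor v δ₂.1 c) :=
    (isColoring_extendByColor_iff hT hv hN δ₂ c).mpr fun h => hc (hsub h)
  exact ⟨_, _, restrictNode_csgNode_extendByColor hv δ₁ h₁,
    restrictNode_csgNode_extendByColor hv δ₂ h₂, csg_adj_extendByColor hv ht hδt hδ h₁ h₂⟩

end Extension

section Cardinality

variable {V : Type*} {G : SimpleGraph V} {k : ℕ} {T : Set V} {v : V}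

lemma isVertexCut_diff_singleton (hTne : T ≠ Set.univ) (hv : v ∈ T)
    (hN : ∀ u : V, G.Adj v u → u ∈ T) : IsVertexCut G (T \ {v}) := by
  intro hpre
  obtain ⟨w, hw⟩ := (Set.ne_univ_iff_exists_notMem T).mp hTne
  obtain ⟨p⟩ := hpre ⟨v, fun h => h.2 rfl⟩ ⟨w, fun h => hw h.1⟩
  by_cases hnil : p.Nil
  · have hvw : v = w := congrArg Subtype.val hnil.eq
    exact hw (hvw ▸ hv)
  · have h : G.Adj v p.snd.1 := p.adj_snd hnil
    exact p.snd.2 ⟨hN _ h, h.ne'⟩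

lemma ncard_Tdel : (Tdel T v).ncard = (T \ {v}).ncard := by
  rw [← Set.ncard_image_of_injective _ Subtype.val_injective]
  congr 1
  ext u
  exact ⟨by rintro ⟨u, hu, rfl⟩; exact ⟨hu, u.2⟩, fun hu => ⟨⟨u, hu.2⟩, hu.1, rfl⟩⟩

lemma ncard_eq_of_lConnected [Finite V] (hconn : LConnected G (k - 2)) (hTne : T ≠ Set.univ)
    (hv : v ∈ T) (hN : ∀ u : V, G.Adj v u → u ∈ T) (hlt : T.ncard < k) :
    T.ncard + 1 = k ∧ (Tdel T v).ncard + 2 = k := by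
  have hcut := hconn.2.2 _ (isVertexCut_diff_singleton hTne hv hN)
  have hdiff := Set.ncard_sdiff_singleton_add_one hv
  rw [ncard_Tdel]
  omega

end Cardinality

section IntroduceStep

variable {V : Type*} [DecidableEq V] {G : SimpleGraph V} {k : ℕ} {T : Set V} {v : V}

/-- The label components `z₁ ≠ z₂` over `d` give `v` two colours `c₁ ≠ c₂`, which are exactly
the colours missing at `d`; a neighbour of `d` reached by an edge at `z₁` cannot use `c₁`, so the
new colour it brings is `c₂`, and symmetrically. -/
lemma two_le_ncard_newColors (hT : G.IsClique T) (hv : v ∈ T)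
    (hN : ∀ u : V, G.Adj v u → u ∈ T) (hcard : (Tdel T v).ncard + 2 = k)
    {a b : CSGNode (G.induce (delSet v)) k (Tdel T v)}
    {Q : (CSG (G.induce (delSet v)) k (Tdel T v)).Walk a b}
    {d : CSGNode (G.induce (delSet v)) k (Tdel T v)} {z₁ z₂ w₁ w₂ : CSGNode G k T}
    (hz : z₁ ≠ z₂) (hz₁ : restrictNode G k T v hv z₁ = d) (hz₂ : restrictNode G k T v hv z₂ = d)
    (hzw₁ : (CSG G k T).Adj z₁ w₁) (hzw₂ : (CSG G k T).Adj z₂ w₂)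
    (hd₁ : Q.toSubgraph.Adj d (restrictNode G k T v hv w₁))
    (hd₂ : Q.toSubgraph.Adj d (restrictNode G k T v hv w₂)) :
    2 ≤ (newColors (csgLabel (G.induce (delSet v)) k (Tdel T v)) Q d).ncard := by
  have key : ∀ {z z' w}, z ≠ z' → restrictNode G k T v hv z = d →
      restrictNode G k T v hv z' = d → (CSG G k T).Adj z w →
      Q.toSubgraph.Adj d (restrictNode G k T v hv w) →
      csgLabel G k T z' ⟨v, hv⟩ ∈ newColors (csgLabel (G.induce (delSet v)) k (Tdel T v)) Q d := by
    intro z z' w hzz' hz hz' hzw hdw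
    have hmissing : {csgLabel G k T z ⟨v, hv⟩, csgLabel G k T z' ⟨v, hv⟩} =
        (Set.range (csgLabel (G.induce (delSet v)) k (Tdel T v) d))ᶜ := by
      refine Set.eq_of_subset_of_ncard_le ?_ ?_
      · rintro _ (rfl | rfl)
        · exact hz ▸ csgLabel_self_notMem_range_restrictNode hT hv z
        · exact hz' ▸ csgLabel_self_notMem_range_restrictNode hT hv z'
      · rw [ncard_compl_range_csgLabel (Tdel_isClique hT),
          Set.ncard_pair (csgLabel_self_ne_of_restrictNode_eq hT hv hN hzz' (hz.trans hz'.symm))]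
        omega
    obtain ⟨c, hcw, hcd⟩ := exists_mem_range_notMem_range_of_csg_adj (Tdel_isClique hT) hdw.adj_sub
    have hc : c ∈ (Set.range (csgLabel (G.induce (delSet v)) k (Tdel T v) d))ᶜ := hcd
    rcases hmissing ▸ hc with rfl | rfl
    · rw [csgLabel_self_eq_of_adj_of_restrictNode_ne hT hv hzw (hz ▸ hdw.ne)] at hcw
      exact absurd hcw (csgLabel_self_notMem_range_restrictNode hT hv w)
    · exact mem_newColors hdw hcw hcd
  have hsub : {csgLabel G k T z₂ ⟨v, hv⟩, csgLabel G k T z₁ ⟨v, hv⟩} ⊆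
      newColors (csgLabel (G.induce (delSet v)) k (Tdel T v)) Q d := by
    rintro _ (rfl | rfl)
    · exact key hz hz₁ hz₂ hzw₁ hd₁
    · exact key hz.symm hz₂ hz₁ hzw₂ hd₂
  have := Set.ncard_le_ncard hsub
  rwa [Set.ncard_pair (csgLabel_self_ne_of_restrictNode_eq hT hv hN hz (hz₁.trans hz₂.symm)).symm]
    at this

lemma isAcyclic_csg_induce_delSet (hforest : (CSG G k T).IsAcyclic) (hT : G.IsClique T) (hv : v ∈ T)
    (hN : ∀ u : V, G.Adj v u → u ∈ T) (hcard : (Tdel T v).ncard + 2 = k) :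
    (CSG (G.induce (delSet v)) k (Tdel T v)).IsAcyclic :=
  hforest.of_lift (f := restrictNode G k T v hv) (fun _ _ => adj_of_restrictNode_eq hT hv hN)
    (fun _ _ => exists_adj_restrictNode_of_adj hT hv hN hcard)

/-- A vertex `d` of the projection has at most two preimages on `P` (no triangles), at least
`1` new colour if the projection is nontrivial, and at least `2` if it has two preimages and is
not an end. -/
lemma card_filter_restrictNode_le [DecidableEq (CSGNode G k T)]
    [DecidableEq (CSGNode (G.induce (delSet v)) k (Tdel T v))] (hforest : (CSG G k T).IsAcyclic)
    (hT : G.IsClique T) (hv : v ∈ T) (hN : ∀ u : V, G.Adj v u → u ∈ T)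
    (hcard : (Tdel T v).ncard + 2 = k) {x y : CSGNode G k T} {P : (CSG G k T).Walk x y}
    (hP : P.IsPath) {d : CSGNode (G.induce (delSet v)) k (Tdel T v)}
    (hd : d ∈ (P.project (restrictNode G k T v hv)
      fun _ _ => restrictNode_eq_or_adj_of_adj hT hv).support) :
    (P.support.toFinset.filter (restrictNode G k T v hv · = d)).card ≤
      (newColors (csgLabel (G.induce (delSet v)) k (Tdel T v))
        (P.project (restrictNode G k T v hv) fun _ _ => restrictNode_eq_or_adj_of_adj hT hv)
          d).ncard +
      ((if d = restrictNode G k T v hv x then 1 else 0) +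
        (if d = restrictNode G k T v hv y then 1 else 0)) := by
  set r := restrictNode G k T v hv
  set Q := P.project r fun _ _ => restrictNode_eq_or_adj_of_adj hT hv
  change (P.support.toFinset.filter (r · = d)).card ≤ _ +
    ((if d = r x then 1 else 0) + (if d = r y then 1 else 0))
  have hfib : ∀ ⦃z z'⦄, z ≠ z' → r z = r z' → (CSG G k T).Adj z z' :=
    fun _ _ => adj_of_restrictNode_eq hT hv hN
  have htwo := hforest.card_filter_eq_le_two hfib P.support.toFinset d
  by_cases hnil : Q.Nil
  · have hdx : d = r x := by simpa [Walk.nil_iff_support_eq.mp hnil] using hd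
    rw [if_pos hdx, if_pos (hdx.trans hnil.eq)]
    omega
  have hone := one_le_ncard_newColors (Tdel_isClique hT) hnil hd
  by_cases hend : d = r x ∨ d = r y
  · have : 1 ≤ (if d = r x then 1 else 0) + (if d = r y then 1 else 0) := by
      rcases hend with h | h <;> simp [h]
    omega
  rw [not_or] at hend
  rw [if_neg hend.1, if_neg hend.2]
  by_contra! hlt
  obtain ⟨z, hz, z', hz', hzz'⟩ :=
    Finset.one_lt_card.mp (by omega : 1 < (P.support.toFinset.filter (r · = d)).card)
  simp only [Finset.mem_filter, List.mem_toFinset] at hz hz'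
  obtain ⟨z₁, z₂, w₁, w₂, h₁₂, hz₁, hz₂, hw₁, hw₂, hd₁, hd₂⟩ :=
    hforest.exists_adj_of_mem_support_project hfib hP hd hend.1 hend.2 hz.1 hz'.1 hzz' hz.2 hz'.2
  have : 2 ≤ (newColors (csgLabel (G.induce (delSet v)) k (Tdel T v)) Q d).ncard :=
    two_le_ncard_newColors hT hv hN hcard h₁₂ hz₁ hz₂ hw₁ hw₂ hd₁ hd₂
  omega

lemma length_add_one_le_walkWeight_project (hforest : (CSG G k T).IsAcyclic)
    (hT : G.IsClique T) (hv : v ∈ T) (hN : ∀ u : V, G.Adj v u → u ∈ T)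
    (hcard : (Tdel T v).ncard + 2 = k) {x y : CSGNode G k T} {P : (CSG G k T).Walk x y}
    (hP : P.IsPath) :
    P.length + 1 ≤ walkWeight (csgLabel (G.induce (delSet v)) k (Tdel T v))
      (P.project (restrictNode G k T v hv) fun _ _ => restrictNode_eq_or_adj_of_adj hT hv) + 2 := by
  classical
  set r := restrictNode G k T v hv
  set Q := P.project r fun _ _ => restrictNode_eq_or_adj_of_adj hT hv
  calc P.length + 1 = P.support.toFinset.card := by
        rw [List.toFinset_card_of_nodup hP.support_nodup, Walk.length_support]
    _ = ∑ d ∈ Q.support.toFinset, (P.support.toFinset.filter (r · = d)).card :=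
        Finset.card_eq_sum_card_fiberwise fun z hz =>
          List.mem_toFinset.mpr (Walk.mem_support_project (List.mem_toFinset.mp hz))
    _ ≤ ∑ d ∈ Q.support.toFinset,
          ((newColors (csgLabel (G.induce (delSet v)) k (Tdel T v)) Q d).ncard +
            ((if d = r x then 1 else 0) + (if d = r y then 1 else 0))) :=
        Finset.sum_le_sum fun d hd =>
          card_filter_restrictNode_le hforest hT hv hN hcard hP (List.mem_toFinset.mp hd)
    _ = walkWeight (csgLabel (G.induce (delSet v)) k (Tdel T v)) Q + 2 := by
        rw [Finset.sum_add_distrib, Finset.sum_add_distrib, Finset.sum_ite_eq',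
          Finset.sum_ite_eq', if_pos (List.mem_toFinset.mpr Q.start_mem_support),
          if_pos (List.mem_toFinset.mpr Q.end_mem_support), walkWeight_eq_sum]

end IntroduceStep

theorem statement_18_general {V : Type} (G : SimpleGraph V)
    (k : ℕ) (hconn : LConnected G (k - 2))
    (T : Set V) (hT : G.IsClique T) (hTne : T ≠ Set.univ) (v : V) (hv : v ∈ T)
    (hN : ∀ u : V, G.Adj v u → u ∈ T)
    (α β : {f : V → Fin k // IsColoring G k f})
    (hforest : IsAcyclic (CSG G k T))
    (P' : (CSG G k T).Walk (csgNode G k T α) (csgNode G k T β)) (hP' : P'.IsPath) :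
    (IsAcyclic (CSG (G.induce (delSet v)) k (Tdel T v)) →
      ∀ P : (CSG (G.induce (delSet v)) k (Tdel T v)).Walk
          (csgNode (G.induce (delSet v)) k (Tdel T v) (restrictColoring G k (delSet v) α))
          (csgNode (G.induce (delSet v)) k (Tdel T v) (restrictColoring G k (delSet v) β)),
        P.IsPath →
        walkWeight (csgLabel G k T) P' ≤
          walkWeight (csgLabel (G.induce (delSet v)) k (Tdel T v)) P + 2) ∧
    (¬ (IsAcyclic (CSG (G.induce (delSet v)) k (Tdel T v)) ∧
        (CSG (G.induce (delSet v)) k (Tdel T v)).Reachable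
          (csgNode (G.induce (delSet v)) k (Tdel T v) (restrictColoring G k (delSet v) α))
          (csgNode (G.induce (delSet v)) k (Tdel T v) (restrictColoring G k (delSet v) β))) →
      walkWeight (csgLabel G k T) P' = 0) := by
  classical
  -- `Nat.card V = 0` for infinite `V`
  have : Finite V := Nat.finite_of_card_ne_zero (by have := hconn.2.1; omega)
  by_cases hnil : P'.Nil
  · exact ⟨fun _ _ _ => (walkWeight_eq_zero_of_nil hnil).trans_le (Nat.zero_le _),
      fun _ => walkWeight_eq_zero_of_nil hnil⟩
  obtain ⟨hcard, hcard'⟩ :=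
    ncard_eq_of_lConnected hconn hTne hv hN (ncard_lt_of_csg_adj hT (P'.adj_snd hnil))
  have hacyc := isAcyclic_csg_induce_delSet hforest hT hv hN hcard'
  set Q := P'.project (restrictNode G k T v hv) fun _ _ => restrictNode_eq_or_adj_of_adj hT hv
  refine ⟨fun _ P hP => ?_, fun h => absurd ⟨hacyc, ⟨Q⟩⟩ h⟩
  have hQ : Q.IsPath := hP'.project hforest (fun _ _ => adj_of_restrictNode_eq hT hv hN)
  obtain rfl : P = Q := congrArg Subtype.val (hacyc.subsingleton_path _ _ |>.elim ⟨P, hP⟩ ⟨Q, hQ⟩)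
  rw [walkWeight_eq_length_add_one hT hcard hP' hnil]
  exact length_add_one_le_walkWeight_project hforest hT hv hN hcard' hP'

/-- (introduce step for essential information) suppose `(G,T)` is
obtained from `(G−v, T∖{v})` by an introduce operation and `C^c_k(G,T)` is a forest
with unique `α`-`β`-path `P'`. If `C^c_k(G−v, T∖{v})` is a forest with a unique path
`P` from the `α''`-node to the `β''`-node, then `w(P') ≤ w(P) + 2`; otherwise
`w(P') = 0`. -/
theorem statement_18 {V : Type} [Fintype V] [DecidableEq V] (G : SimpleGraph V)
    (k : ℕ) (hk : 3 ≤ k) (hconn : LConnected G (k - 2)) (hchord : Chordal G)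
    (hcol : ∃ α : V → Fin k, IsColoring G k α)
    (T : Set V) (hT : G.IsClique T) (hTne : T ≠ Set.univ) (v : V) (hv : v ∈ T)
    (hN : ∀ u : V, G.Adj v u → u ∈ T)
    (α β : {f : V → Fin k // IsColoring G k f})
    (hforest : IsAcyclic (CSG G k T))
    (P' : (CSG G k T).Walk (csgNode G k T α) (csgNode G k T β)) (hP' : P'.IsPath) :
    (IsAcyclic (CSG (G.induce (delSet v)) k (Tdel T v)) →
      ∀ P : (CSG (G.induce (delSet v)) k (Tdel T v)).Walk
          (csgNode (G.induce (delSet v)) k (Tdel T v) (restrictColoring G k (delSet v) α))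
          (csgNode (G.induce (delSet v)) k (Tdel T v) (restrictColoring G k (delSet v) β)),
        P.IsPath →
        walkWeight (csgLabel G k T) P' ≤
          walkWeight (csgLabel (G.induce (delSet v)) k (Tdel T v)) P + 2) ∧
    (¬ (IsAcyclic (CSG (G.induce (delSet v)) k (Tdel T v)) ∧
        (CSG (G.induce (delSet v)) k (Tdel T v)).Reachable
          (csgNode (G.induce (delSet v)) k (Tdel T v) (restrictColoring G k (delSet v) α))
          (csgNode (G.induce (delSet v)) k (Tdel T v) (restrictColoring G k (delSet v) β))) →
      walkWeight (csgLabel G k T) P' = 0) :=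
  statement_18_general G k hconn T hT hTne v hv hN α β hforest P' hP'
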